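/- Let V be a real vector space and let a, b : V × V → ℝ be symmetric bilinear forms. Let u, u_h, w ∈ V and λ, λ_h ∈ ℝ satisfy b(u,u) = 1, b(u_h,u_h) = 1, a(u,u) = λ, a(u_h,u_h) = λ_h, and a(w − u_h, u_h) = λ_h b(w − u_h, u_h). Then λ − λ_h = a(u − u_h, u − u_h) − λ_h b(u − u_h, u − u_h) + 2 a(u − w, u_h) − 2 λ_h b(u − w, u_h). -/

import Mathlib

/-!
Shift the form: with `c := a - λ_h b` the discrete eigenpair makes `u_h` isotropic for `c` and
Galerkin orthogonality makes `w - u_h` orthogonal to `u_h`, while `c u u = λ - λ_h`. Expanding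
`c (u - u_h) (u - u_h)` and `c (u - w) u_h` then gives the identity.
-/

theorem LinearMap.apply_self_eq_of_isotropic_of_orthogonal {R M : Type*} [CommRing R]
    [AddCommGroup M] [Module R M] {B : M →ₗ[R] M →ₗ[R] R} (hB : ∀ x y, B x y = B y x)
    {u v w : M} (hv : B v v = 0) (hw : B (w - v) v = 0) :
    B u u = B (u - v) (u - v) + 2 * B (u - w) v := by
  simp only [map_sub, LinearMap.sub_apply] at hw ⊢
  rw [hB v u]
  linear_combination hv + 2 * hw

/-- Lemma 3.1 in abstract form: the eigenvalue error identity (3.2). -/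
theorem stmt_3 {V : Type*} [AddCommGroup V] [Module ℝ V]
    (a b : V →ₗ[ℝ] V →ₗ[ℝ] ℝ)
    (ha : ∀ x y : V, a x y = a y x) (hb : ∀ x y : V, b x y = b y x)
    (u u_h w : V) (lam lam_h : ℝ)
    (hbu : b u u = 1) (hbuh : b u_h u_h = 1)
    (hau : a u u = lam) (hauh : a u_h u_h = lam_h)
    (hgal : a (w - u_h) u_h = lam_h * b (w - u_h) u_h) :
    lam - lam_h =
      a (u - u_h) (u - u_h) - lam_h * b (u - u_h) (u - u_h)
        + 2 * a (u - w) u_h - 2 * lam_h * b (u - w) u_h := by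
  set c := a - lam_h • b
  have hc : ∀ x y, c x y = a x y - lam_h * b x y := fun _ _ => rfl
  have hc_symm : ∀ x y, c x y = c y x := fun x y => by rw [hc, hc, ha, hb]
  have hc_uh : c u_h u_h = 0 := by rw [hc, hauh, hbuh, mul_one, sub_self]
  have hc_gal : c (w - u_h) u_h = 0 := by rw [hc, hgal, sub_self]
  have key := LinearMap.apply_self_eq_of_isotropic_of_orthogonal (u := u) hc_symm hc_uh hc_gal
  rw [hc, hc, hc, hau, hbu] at key
  linear_combination key
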